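/- Every point satisfying the Fréchet–Hoeffding bounds is attained: for all real numbers x, y, z with 0 ≤ x ≤ 1, 0 ≤ y ≤ 1 and max{x + y − 1, 0} ≤ z ≤ min{x, y}, there exists a probability measure P on the finite sample space {0,1}⁴ (all subsets measurable), with coordinate events A := {ω : ω₁ = 1}, H := {ω : ω₂ = 1}, B := {ω : ω₃ = 1}, K := {ω : ω₄ = 1}, such that P(H) > 0, P(K) > 0, P(A|H) = x, P(B|K) = y, and [P(A∩H∩B∩K) + x·P(Hᶜ∩B∩K) + y·P(A∩H∩Kᶜ)]/P(H∪K) = z. -/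

import Mathlib

open MeasureTheory
open scoped Classical

/-- `P(E|H) := P(E∩H)/P(H)`. -/
noncomputable def condProb {Ω : Type*} [MeasurableSpace Ω] (P : Measure Ω)
    (E H : Set Ω) : ℝ :=
  (P (E ∩ H)).toReal / (P H).toReal

/-- The conditional event `E|H`: the random variable equal to `1` on `E∩H`, to `0` on
`H∖E`, and to `P(E|H)` on `Hᶜ`. -/
noncomputable def condEvent {Ω : Type*} [MeasurableSpace Ω] (P : Measure Ω)
    (E H : Set Ω) : Ω → ℝ := fun ω =>
  if ω ∈ E ∩ H then 1 else if ω ∈ H \ E then 0 else condProb P E H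

/-- The prevision `z := [P(A∩H∩B∩K) + x·P(Hᶜ∩B∩K) + y·P(A∩H∩Kᶜ)]/P(H∪K)` of the
conjunction `(A|H) ∧ (B|K)`, where `x := P(A|H)` and `y := P(B|K)`. -/
noncomputable def conjPrev {Ω : Type*} [MeasurableSpace Ω] (P : Measure Ω)
    (A H B K : Set Ω) : ℝ :=
  ((P (A ∩ H ∩ (B ∩ K))).toReal + condProb P A H * (P (Hᶜ ∩ (B ∩ K))).toReal +
      condProb P B K * (P (A ∩ H ∩ Kᶜ)).toReal) / (P (H ∪ K)).toReal

/-- The conjunction `(A|H) ∧ (B|K)`: the random variable equal to `1` on `A∩H∩B∩K`, to `0`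
on `(H∖A) ∪ (K∖B)`, to `x := P(A|H)` on `Hᶜ∩B∩K`, to `y := P(B|K)` on `A∩H∩Kᶜ`, and to
`z := [P(A∩H∩B∩K) + x·P(Hᶜ∩B∩K) + y·P(A∩H∩Kᶜ)]/P(H∪K)` on `Hᶜ∩Kᶜ`. -/
noncomputable def conj2 {Ω : Type*} [MeasurableSpace Ω] (P : Measure Ω)
    (A H B K : Set Ω) : Ω → ℝ := fun ω =>
  if ω ∈ A ∩ H ∩ (B ∩ K) then 1
  else if ω ∈ (H \ A) ∪ (K \ B) then 0
  else if ω ∈ Hᶜ ∩ (B ∩ K) then condProb P A H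
  else if ω ∈ A ∩ H ∩ Kᶜ then condProb P B K
  else conjPrev P A H B K

/-!
Concentrate `P` on `H ∩ K`. Then `P(A|H) = P(A)`, `P(B|K) = P(B)`, the two correction terms
`P(Hᶜ∩B∩K)` and `P(A∩H∩Kᶜ)` vanish and `P(H∪K) = 1`, so the prevision of the conjunction is
just `P(A∩B)`. It remains to find two events with `P(A) = x`, `P(B) = y`, `P(A∩B) = z`: the
Fréchet–Hoeffding bounds say precisely that the four cells `z, x - z, y - z, 1 - x - y + z`
of the corresponding `2 × 2` table are nonnegative.
-/

section ConditionedOnConull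

variable {Ω : Type*} [MeasurableSpace Ω] (P : Measure Ω) [IsProbabilityMeasure P]

theorem condProb_eq_of_measure_compl_eq_zero (E : Set Ω) {H : Set Ω} (hH : P Hᶜ = 0) :
    condProb P E H = (P E).toReal := by
  rw [condProb, measure_inter_conull hH, measure_of_measure_compl_eq_zero hH, measure_univ,
    ENNReal.toReal_one, div_one]

theorem conjPrev_eq_of_measure_compl_eq_zero (A B : Set Ω) {H K : Set Ω}
    (hH : P Hᶜ = 0) (hK : P Kᶜ = 0) :
    conjPrev P A H B K = (P (A ∩ B)).toReal := by
  have hHK : P (H ∩ K)ᶜ = 0 := by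
    rw [Set.compl_inter]
    exact measure_union_null hH hK
  have hAB : P (A ∩ H ∩ (B ∩ K)) = P (A ∩ B) := by
    rw [show A ∩ H ∩ (B ∩ K) = A ∩ B ∩ (H ∩ K) by ac_rfl, measure_inter_conull hHK]
  have hHc : P (Hᶜ ∩ (B ∩ K)) = 0 := measure_mono_null Set.inter_subset_left hH
  have hKc : P (A ∩ H ∩ Kᶜ) = 0 := measure_mono_null Set.inter_subset_right hK
  have hUnion : P (H ∪ K) = 1 := by
    rw [measure_of_measure_compl_eq_zero
      (measure_mono_null (Set.compl_subset_compl.2 Set.subset_union_left) hH), measure_univ]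
  simp only [conjPrev, hAB, hHc, hKc, hUnion, ENNReal.toReal_zero, ENNReal.toReal_one,
    mul_zero, add_zero, div_one]

end ConditionedOnConull

theorem sum_smul_dirac_apply_eq_ofReal {ι Ω : Type*} [Fintype ι] [MeasurableSpace Ω]
    [MeasurableSingletonClass Ω] {w : ι → ℝ} (hw : ∀ i, 0 ≤ w i) (p : ι → Ω) (S : Set Ω) :
    (∑ i, ENNReal.ofReal (w i) • Measure.dirac (p i)) S =
      ENNReal.ofReal (∑ i, if p i ∈ S then w i else 0) := by
  rw [ENNReal.ofReal_sum_of_nonneg fun i _ => by split_ifs <;> simp [hw i]]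
  simp only [Measure.coe_finsetSum, Finset.sum_apply, Measure.smul_apply, smul_eq_mul,
    Measure.dirac_apply, Set.indicator_apply, Pi.one_apply]
  refine Finset.sum_congr rfl fun i _ => ?_
  split_ifs <;> simp

/-- The joint law of the indicators of two events `A`, `B` with `P(A) = x`, `P(B) = y` and
`P(A ∩ B) = z`. -/
def frechetWeight (x y z : ℝ) : Bool × Bool → ℝ
  | (true, true) => z
  | (true, false) => x - z
  | (false, true) => y - z
  | (false, false) => 1 - x - y + z

theorem frechetWeight_nonneg {x y z : ℝ} (hz : max (x + y - 1) 0 ≤ z) (hz' : z ≤ min x y) :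
    ∀ ab, 0 ≤ frechetWeight x y z ab := by
  rw [max_le_iff] at hz
  rw [le_min_iff] at hz'
  rintro ⟨_ | _, _ | _⟩ <;> simp only [frechetWeight] <;> linarith

noncomputable def frechetMeasure (x y z : ℝ) : Measure (Fin 4 → Bool) :=
  ∑ ab : Bool × Bool,
    ENNReal.ofReal (frechetWeight x y z ab) • Measure.dirac ![ab.1, true, ab.2, true]

section FrechetMeasure

variable {x y z : ℝ} (hw : ∀ ab, 0 ≤ frechetWeight x y z ab)
include hw

theorem frechetMeasure_apply (S : Set (Fin 4 → Bool)) :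
    frechetMeasure x y z S = ENNReal.ofReal
      (∑ ab : Bool × Bool, if ![ab.1, true, ab.2, true] ∈ S then frechetWeight x y z ab else 0) :=
  sum_smul_dirac_apply_eq_ofReal hw _ S

theorem frechetMeasure_toReal_apply (S : Set (Fin 4 → Bool)) :
    (frechetMeasure x y z S).toReal =
      ∑ ab : Bool × Bool, if ![ab.1, true, ab.2, true] ∈ S then frechetWeight x y z ab else 0 := by
  rw [frechetMeasure_apply hw, ENNReal.toReal_ofReal]
  exact Finset.sum_nonneg fun ab _ => by split_ifs <;> simp [hw ab]

theorem isProbabilityMeasure_frechetMeasure : IsProbabilityMeasure (frechetMeasure x y z) := by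
  constructor
  simp [frechetMeasure_apply hw, Fintype.sum_prod_type, frechetWeight]

theorem frechetMeasure_coord_one_compl : frechetMeasure x y z {ω | ω 1 = true}ᶜ = 0 := by
  simp [frechetMeasure_apply hw]

theorem frechetMeasure_coord_three_compl : frechetMeasure x y z {ω | ω 3 = true}ᶜ = 0 := by
  simp [frechetMeasure_apply hw]

theorem frechetMeasure_coord_zero : (frechetMeasure x y z {ω | ω 0 = true}).toReal = x := by
  simp [frechetMeasure_toReal_apply hw, Fintype.sum_prod_type, frechetWeight]

theorem frechetMeasure_coord_two : (frechetMeasure x y z {ω | ω 2 = true}).toReal = y := by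
  simp [frechetMeasure_toReal_apply hw, Fintype.sum_prod_type, frechetWeight]

theorem frechetMeasure_coord_zero_inter_two :
    (frechetMeasure x y z ({ω | ω 0 = true} ∩ {ω | ω 2 = true})).toReal = z := by
  simp [frechetMeasure_toReal_apply hw, Fintype.sum_prod_type, frechetWeight]

end FrechetMeasure

theorem stmt19_general (x y z : ℝ)
    (hz : max (x + y - 1) 0 ≤ z) (hz' : z ≤ min x y) :
    ∃ P : Measure (Fin 4 → Bool), IsProbabilityMeasure P ∧
      0 < P {ω | ω 1 = true} ∧ 0 < P {ω | ω 3 = true} ∧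
      condProb P {ω | ω 0 = true} {ω | ω 1 = true} = x ∧
      condProb P {ω | ω 2 = true} {ω | ω 3 = true} = y ∧
      conjPrev P {ω | ω 0 = true} {ω | ω 1 = true} {ω | ω 2 = true} {ω | ω 3 = true}
        = z := by
  have hw := frechetWeight_nonneg hz hz'
  have hP := isProbabilityMeasure_frechetMeasure hw
  have hH := frechetMeasure_coord_one_compl hw
  have hK := frechetMeasure_coord_three_compl hw
  refine ⟨frechetMeasure x y z, hP, ?_, ?_, ?_, ?_, ?_⟩
  · simp [measure_of_measure_compl_eq_zero hH]
  · simp [measure_of_measure_compl_eq_zero hK]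
  · rw [condProb_eq_of_measure_compl_eq_zero _ _ hH, frechetMeasure_coord_zero hw]
  · rw [condProb_eq_of_measure_compl_eq_zero _ _ hK, frechetMeasure_coord_two hw]
  · rw [conjPrev_eq_of_measure_compl_eq_zero _ _ _ hH hK, frechetMeasure_coord_zero_inter_two hw]

/-- Every point satisfying the Fréchet–Hoeffding bounds is attained:
for all reals `x, y, z` with `0 ≤ x ≤ 1`, `0 ≤ y ≤ 1` and
`max {x + y − 1, 0} ≤ z ≤ min {x, y}`, there is a probability measure `P` on `{0,1}⁴`
(all subsets measurable) with coordinate events `A, H, B, K` such that `P(H) > 0`,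
`P(K) > 0`, `P(A|H) = x`, `P(B|K) = y`, and
`[P(A∩H∩B∩K) + x·P(Hᶜ∩B∩K) + y·P(A∩H∩Kᶜ)]/P(H∪K) = z`. -/
theorem stmt19 (x y z : ℝ) (hx : 0 ≤ x) (hx1 : x ≤ 1) (hy : 0 ≤ y) (hy1 : y ≤ 1)
    (hz : max (x + y - 1) 0 ≤ z) (hz' : z ≤ min x y) :
    ∃ P : Measure (Fin 4 → Bool), IsProbabilityMeasure P ∧
      0 < P {ω | ω 1 = true} ∧ 0 < P {ω | ω 3 = true} ∧
      condProb P {ω | ω 0 = true} {ω | ω 1 = true} = x ∧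
      condProb P {ω | ω 2 = true} {ω | ω 3 = true} = y ∧
      conjPrev P {ω | ω 0 = true} {ω | ω 1 = true} {ω | ω 2 = true} {ω | ω 3 = true}
        = z :=
  stmt19_general x y z hz hz'
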